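/- arXiv:2008.00984 — 2 statements merged into one kernel-verified Lean document; each statement's English description precedes it below -/
import Mathlib

section
/- Let T ⊂ S(N) be any transversal of the right cosets of the subgroup S(N−k) (permuting {1,…,N−k}) in S(N), where S(N) acts by V_τ on the port factors A_1,…,A_N. Then: (i) the map τ ↦ (τ⁻¹(N), τ⁻¹(N−1), …, τ⁻¹(N−k+1)) is a bijection from T onto I; (ii) σ_{(N,N−1,…,N−k+1)} = (1/d^N)·V^{(k)}; and (iii) the MPBT operator satisfies ρ = Σ_{i∈I} σ_i = (1/d^N)·Σ_{τ∈T} V_{τ⁻¹}·V^{(k)}·V_τ. -/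
open scoped BigOperators
open scoped Classical
open scoped ComplexOrder
open Matrix

noncomputable section

/-- Square matrices on the computational basis of `(ℂ^d)^{⊗ n}`. -/
abbrev Mat (d n : ℕ) := Matrix (Fin n → Fin d) (Fin n → Fin d) ℂ

/-- The unitary permuting the tensor factors according to `σ`. -/
def Vperm (d n : ℕ) (σ : Equiv.Perm (Fin n)) : Mat d n :=
  Matrix.of fun f g => if f ∘ σ = g then (1 : ℂ) else 0

/-- Orthogonal projector onto the maximally entangled state of factors `r` and `s`,
tensored with the identity on the remaining factors. -/
def Pplus (d n : ℕ) (r s : Fin n) : Mat d n :=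
  Matrix.of fun f g =>
    if f r = f s ∧ g r = g s ∧ ∀ t : Fin n, t ≠ r → t ≠ s → f t = g t
    then (1 : ℂ) / d else 0

/-- `V^{(k)} = d^k · P⁺_{n-2k+1,n} ⋯ P⁺_{n-k,n-k+1}` on `n = a + 2k` factors
(`a = n - 2k`), tensored with the identity on the remaining factors. -/
def Vk (d a k : ℕ) : Mat d (a + k + k) :=
  ((d : ℂ) ^ k) •
    ((List.finRange k).map fun j : Fin k =>
      Pplus d (a + k + k) ⟨a + (j : ℕ), by have := j.isLt; omega⟩
        ⟨a + k + k - 1 - (j : ℕ), by have := j.isLt; omega⟩).prod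

/-- Extension of an operator on the first `m` factors by the identity on the rest. -/
def extOp {d m n : ℕ} (h : m ≤ n) (X : Mat d m) : Mat d n :=
  Matrix.of fun f g =>
    if ∀ i : Fin n, m ≤ (i : ℕ) → f i = g i
    then X (fun i => f (Fin.castLE h i)) (fun i => g (Fin.castLE h i)) else 0

def splice {d a b : ℕ} (f : Fin a → Fin d) (t : Fin b → Fin d) : Fin (a + b) → Fin d :=
  fun i => if h : (i : ℕ) < a then f ⟨i, h⟩ else t ⟨(i : ℕ) - a, by have := i.isLt; omega⟩

/-- Partial trace over the last `b` tensor factors. -/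
def ptraceLast {d : ℕ} (a b : ℕ) (X : Mat d (a + b)) : Mat d a :=
  Matrix.of fun f g => ∑ t : Fin b → Fin d, X (splice f t) (splice g t)

def finLtEquiv {m n : ℕ} (h : m ≤ n) : Fin m ≃ {i : Fin n // (i : ℕ) < m} where
  toFun i := ⟨⟨(i : ℕ), lt_of_lt_of_le i.isLt h⟩, i.isLt⟩
  invFun j := ⟨(j.1 : ℕ), j.2⟩
  left_inv i := rfl
  right_inv j := rfl

/-- The embedding of `S(m)` into `S(n)`, acting on the first `m` letters. -/
def permExt {m n : ℕ} (h : m ≤ n) (σ : Equiv.Perm (Fin m)) : Equiv.Perm (Fin n) :=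
  σ.extendDomain (finLtEquiv h)

/-- A unitary irreducible matrix representation (Schur's criterion). -/
def IsUnitaryIrrep {G : Type*} [Group G] {e : ℕ}
    (φ : G →* Matrix (Fin e) (Fin e) ℂ) : Prop :=
  (∀ g, (φ g)ᴴ * φ g = 1) ∧
  ∀ X : Matrix (Fin e) (Fin e) ℂ, (∀ g, X * φ g = φ g * X) →
    ∃ c : ℂ, X = c • (1 : Matrix (Fin e) (Fin e) ℂ)

/-- Operator basis `E^μ_{ij} = (d_μ/m!) Σ_τ φ^μ_{ji}(τ⁻¹) V_τ` on the first `m` factors. -/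
def Eop (d m : ℕ) {e : ℕ} (φ : Equiv.Perm (Fin m) →* Matrix (Fin e) (Fin e) ℂ)
    (i j : Fin e) : Mat d m :=
  ((e : ℂ) / (Nat.factorial m : ℂ)) •
    ∑ τ : Equiv.Perm (Fin m), φ τ⁻¹ j i • Vperm d m τ

/-- Young projector `P_μ = Σ_i E^μ_{ii}`. -/
def Pop (d m : ℕ) {e : ℕ} (φ : Equiv.Perm (Fin m) →* Matrix (Fin e) (Fin e) ℂ) : Mat d m :=
  ∑ i : Fin e, Eop d m φ i i

/-- Schur–Weyl multiplicity `m_μ = tr(P_μ)/d_μ` (a real number). -/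
def multSW (d m : ℕ) {e : ℕ} (φ : Equiv.Perm (Fin m) →* Matrix (Fin e) (Fin e) ℂ) : ℝ :=
  (Matrix.trace (Pop d m φ)).re / (e : ℝ)

/-- A family of concrete unitary irreducible matrix representations of `S(a)`. -/
structure IrrepFamily (a : ℕ) where
  Label : Type
  [instFintype : Fintype Label]
  [instDecEq : DecidableEq Label]
  dim : Label → ℕ
  dim_pos : ∀ ℓ, 0 < dim ℓ
  rep : ∀ ℓ, Equiv.Perm (Fin a) →* Matrix (Fin (dim ℓ)) (Fin (dim ℓ)) ℂ
  irrep : ∀ ℓ, IsUnitaryIrrep (rep ℓ)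

attribute [instance] IrrepFamily.instFintype IrrepFamily.instDecEq

/-- An irreducible unitary representation of `S(a+k)` in PRIR form relative to the chain
`S(a+k) ⊃ ⋯ ⊃ S(a)`: the restriction to `S(a)` is block diagonal, the blocks being
indexed by branching paths, the block of every path ending at the irrep `α` of `S(a)`
being one and the same fixed matrix irrep `Φ.rep α`. -/
structure PRIRData (a k : ℕ) (Φ : IrrepFamily a) (e : ℕ) where
  rep : Equiv.Perm (Fin (a + k)) →* Matrix (Fin e) (Fin e) ℂ
  irrep : IsUnitaryIrrep rep
  Path : Type
  [instFintypePath : Fintype Path]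
  [instDecEqPath : DecidableEq Path]
  endOf : Path → Φ.Label
  basis : ((r : Path) × Fin (Φ.dim (endOf r))) ≃ Fin e
  block_diag : ∀ (h : Equiv.Perm (Fin a)) (r : Path) (l l' : Fin (Φ.dim (endOf r))),
      rep (permExt (Nat.le_add_right a k) h) (basis ⟨r, l⟩) (basis ⟨r, l'⟩)
        = Φ.rep (endOf r) h l l'
  block_off : ∀ (h : Equiv.Perm (Fin a)) (r r' : Path), r ≠ r' →
      ∀ (l : Fin (Φ.dim (endOf r))) (l' : Fin (Φ.dim (endOf r'))),
      rep (permExt (Nat.le_add_right a k) h) (basis ⟨r, l⟩) (basis ⟨r', l'⟩) = 0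

attribute [instance] PRIRData.instFintypePath PRIRData.instDecEqPath

/-- The number of paths `m_{μ/α}`, i.e. the multiplicity of `α` in the restriction. -/
def PRIRData.pathMult {a k : ℕ} {Φ : IrrepFamily a} {e : ℕ}
    (P : PRIRData a k Φ e) (α : Φ.Label) : ℕ :=
  Fintype.card {r : P.Path // P.endOf r = α}

/-- The basis operators
`F^{r_{μ/α} r_{ν/α}}_{i_μ j_ν} = (m_α/√(m_μ m_ν)) E^μ_{i_μ,(r,1_α)} V^{(k)} E^ν_{(s,1_α),j_ν}`. -/
def Fop (d a k : ℕ) (Φ : IrrepFamily a) {e e' : ℕ}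
    (P : PRIRData a k Φ e) (Q : PRIRData a k Φ e')
    (r : P.Path) (s : Q.Path) (i : Fin e) (j : Fin e') : Mat d (a + k + k) :=
  ((multSW d a (Φ.rep (P.endOf r)) /
      Real.sqrt (multSW d (a + k) P.rep * multSW d (a + k) Q.rep) : ℝ) : ℂ) •
    (extOp (Nat.le_add_right (a + k) k)
        (Eop d (a + k) P.rep i (P.basis ⟨r, ⟨0, Φ.dim_pos _⟩⟩)) *
      Vk d a k *
      extOp (Nat.le_add_right (a + k) k)
        (Eop d (a + k) Q.rep (Q.basis ⟨s, ⟨0, Φ.dim_pos _⟩⟩) j))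

/-- The projectors `F_μ(α) = Σ_{r_{μ/α}} Σ_{k_μ} F^{r r}_{k k}`. -/
def Fproj (d a k : ℕ) (Φ : IrrepFamily a) {e : ℕ}
    (P : PRIRData a k Φ e) (α : Φ.Label) : Mat d (a + k + k) :=
  ∑ r : {r : P.Path // P.endOf r = α}, ∑ i : Fin e, Fop d a k Φ P P r.1 r.1 i i

/-- Eigenvalues `λ_μ(α) = (k!·C(N,k)/d^N)·(m_μ d_α)/(m_α d_μ)` of the MPBT operator. -/
def lambdaEig (d a k : ℕ) (Φ : IrrepFamily a) {e : ℕ}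
    (P : PRIRData a k Φ e) (α : Φ.Label) : ℝ :=
  ((Nat.factorial k * Nat.choose (a + k) k : ℝ) / (d : ℝ) ^ (a + k)) *
    (multSW d (a + k) P.rep * (Φ.dim α : ℝ)) / (multSW d a (Φ.rep α) * (e : ℝ))

/-- A family of irreps of `S(a+k)` in PRIR form relative to `Φ`, one chosen
representative for each isomorphism class (pairwise non-isomorphic and complete). -/
structure PRIRFamily (a k : ℕ) (Φ : IrrepFamily a) where
  Label : Type
  [instFintype : Fintype Label]
  [instDecEq : DecidableEq Label]
  dim : Label → ℕ
  prir : ∀ ℓ, PRIRData a k Φ (dim ℓ)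
  noniso : ∀ ℓ ℓ', ℓ ≠ ℓ' → ∀ T : Matrix (Fin (dim ℓ)) (Fin (dim ℓ')) ℂ,
      (∀ σ, (prir ℓ).rep σ * T = T * (prir ℓ').rep σ) → T = 0
  complete : ∀ (e : ℕ) (ψ : Equiv.Perm (Fin (a + k)) →* Matrix (Fin e) (Fin e) ℂ),
      IsUnitaryIrrep ψ → ∃ ℓ, ∃ T : Matrix (Fin (dim ℓ)) (Fin e) ℂ,
        ∃ T' : Matrix (Fin e) (Fin (dim ℓ)) ℂ,
          T * T' = 1 ∧ T' * T = 1 ∧ ∀ σ, (prir ℓ).rep σ * T = T * ψ σ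

attribute [instance] PRIRFamily.instFintype PRIRFamily.instDecEq

/-- The signal states `σ_i` of the MPBT scheme, for a tuple `v` of (distinct) ports:
the ports are factors `0,…,a+k-1` and `B̃_j` (resp. `C_j`) is factor `a+k+j`. -/
def sigmaOp (d a k : ℕ) (v : Fin k → Fin (a + k)) : Mat d (a + k + k) :=
  ((1 : ℂ) / (d : ℂ) ^ a) •
    ((List.finRange k).map fun j : Fin k =>
      Pplus d (a + k + k) (Fin.castLE (Nat.le_add_right (a + k) k) (v j))
        ⟨a + k + (j : ℕ), by have := j.isLt; omega⟩).prod

/-- The MPBT operator `ρ = Σ_{i ∈ I} σ_i`. -/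
def rhoOp (d a k : ℕ) : Mat d (a + k + k) :=
  ∑ v : {v : Fin k → Fin (a + k) // Function.Injective v}, sigmaOp d a k v.1

/-- `P⁺_{A_i,C}`, tensored with the identity on the remaining ports. -/
def PplusTuple (d a k : ℕ) (v : Fin k → Fin (a + k)) : Mat d (a + k + k) :=
  ((List.finRange k).map fun j : Fin k =>
    Pplus d (a + k + k) (Fin.castLE (Nat.le_add_right (a + k) k) (v j))
      ⟨a + k + (j : ℕ), by have := j.isLt; omega⟩).prod

/-- The increasing enumeration of the ports not appearing in `v`. -/
def compEnum {a k : ℕ} (v : Fin k → Fin (a + k)) (hv : Function.Injective v) :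
    Fin a → Fin (a + k) := fun i =>
  (((Finset.image v Finset.univ)ᶜ.orderIsoOfFin (by
      rw [Finset.card_compl, Finset.card_image_of_injective _ hv, Finset.card_univ,
        Fintype.card_fin, Fintype.card_fin]
      omega)) i).1

/-- Placement of an operator on the tensor factors enumerated by `w`,
tensored with the identity on the remaining factors. -/
def placeOp {d a n : ℕ} (w : Fin a → Fin n) (X : Mat d a) : Mat d n :=
  Matrix.of fun f g =>
    if ∀ i : Fin n, (∀ j, w j ≠ i) → f i = g i
    then X (fun j => f (w j)) (fun j => g (w j)) else 0

/-- `U^{⊗N} ⊗ Ū^{⊗k}`. -/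
def Upow (d N k : ℕ) (U : Matrix (Fin d) (Fin d) ℂ) : Mat d (N + k) :=
  Matrix.of fun f g =>
    ∏ i : Fin (N + k),
      if (i : ℕ) < N then U (f i) (g i) else (starRingEnd ℂ) (U (f i) (g i))

/-- A family of concrete unitary irreps of a subgroup `H ⊆ S(n)`. -/
structure SubIrrepFamily (n : ℕ) (H : Subgroup (Equiv.Perm (Fin n))) where
  Label : Type
  [instFintype : Fintype Label]
  [instDecEq : DecidableEq Label]
  dim : Label → ℕ
  rep : ∀ ℓ, H →* Matrix (Fin (dim ℓ)) (Fin (dim ℓ)) ℂ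
  irrep : ∀ ℓ, IsUnitaryIrrep (rep ℓ)

attribute [instance] SubIrrepFamily.instFintype SubIrrepFamily.instDecEq

/-- An irrep of `S(n)` whose basis is adapted to the subgroup `H` (PRIR form). -/
structure PRIRSubData (n : ℕ) (H : Subgroup (Equiv.Perm (Fin n)))
    (Ψ : SubIrrepFamily n H) (e : ℕ) where
  rep : Equiv.Perm (Fin n) →* Matrix (Fin e) (Fin e) ℂ
  irrep : IsUnitaryIrrep rep
  Path : Type
  [instFintypePath : Fintype Path]
  [instDecEqPath : DecidableEq Path]
  endOf : Path → Ψ.Label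
  basis : ((r : Path) × Fin (Ψ.dim (endOf r))) ≃ Fin e
  block_diag : ∀ (h : H) (r : Path) (l l' : Fin (Ψ.dim (endOf r))),
      rep (h : Equiv.Perm (Fin n)) (basis ⟨r, l⟩) (basis ⟨r, l'⟩) = Ψ.rep (endOf r) h l l'
  block_off : ∀ (h : H) (r r' : Path), r ≠ r' →
      ∀ (l : Fin (Ψ.dim (endOf r))) (l' : Fin (Ψ.dim (endOf r'))),
      rep (h : Equiv.Perm (Fin n)) (basis ⟨r, l⟩) (basis ⟨r', l'⟩) = 0

attribute [instance] PRIRSubData.instFintypePath PRIRSubData.instDecEqPath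

/-- A family of pairwise non-isomorphic irreps of `S(n)` in PRIR form relative to `H`. -/
structure PRIRSubFamily (n : ℕ) (H : Subgroup (Equiv.Perm (Fin n)))
    (Ψ : SubIrrepFamily n H) where
  Label : Type
  [instFintype : Fintype Label]
  [instDecEq : DecidableEq Label]
  dim : Label → ℕ
  prir : ∀ ℓ, PRIRSubData n H Ψ (dim ℓ)
  noniso : ∀ ℓ ℓ', ℓ ≠ ℓ' → ∀ T : Matrix (Fin (dim ℓ)) (Fin (dim ℓ')) ℂ,
      (∀ σ, (prir ℓ).rep σ * T = T * (prir ℓ').rep σ) → T = 0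

attribute [instance] PRIRSubFamily.instFintype PRIRSubFamily.instDecEq

end

/-! Conjugation by `V_τ` only relabels tensor factors, so `V_{τ⁻¹} V^{(k)} V_τ` is again a
product of the projectors `P⁺`, now pairing port `τ⁻¹(N - j)` with `B̃_{j+1}`; since these
projectors act on disjoint pairs of factors they commute, and after rescaling by `d^{-N}` the
product is exactly `σ_i` for `i = (τ⁻¹(N), …, τ⁻¹(N-k+1))`. Two permutations give the same tuple
iff they differ by a permutation fixing the last `k` ports, i.e. iff they lie in the same right
coset of `S(N-k)`, and every tuple of distinct ports is reached since `S(N)` is `k`-transitive. -/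

section Operators

variable {d n : ℕ}

lemma Vperm_mul_apply (σ : Equiv.Perm (Fin n)) (X : Mat d n) (f g : Fin n → Fin d) :
    (Vperm d n σ * X) f g = X (f ∘ σ) g := by
  simp [Vperm, Matrix.mul_apply, ite_mul]

lemma Vperm_mul (σ τ : Equiv.Perm (Fin n)) : Vperm d n σ * Vperm d n τ = Vperm d n (σ * τ) := by
  ext f g
  rw [Vperm_mul_apply]
  rfl

lemma Vperm_one : Vperm d n 1 = 1 := by
  ext f g
  simp [Vperm, Matrix.one_apply]

lemma mul_Vperm_apply (σ : Equiv.Perm (Fin n)) (X : Mat d n) (f g : Fin n → Fin d) :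
    (X * Vperm d n σ) f g = X f (g ∘ σ.symm) := by
  have key : ∀ h : Fin n → Fin d, h ∘ σ = g ↔ h = g ∘ σ.symm := fun h =>
    ⟨fun hh => by rw [← hh, Function.comp_assoc, σ.self_comp_symm, Function.comp_id],
     fun hh => by rw [hh, Function.comp_assoc, σ.symm_comp_self, Function.comp_id]⟩
  simp [Vperm, Matrix.mul_apply, key]

lemma Vperm_conj_apply (σ : Equiv.Perm (Fin n)) (X : Mat d n) (f g : Fin n → Fin d) :
    (Vperm d n σ * X * Vperm d n σ⁻¹) f g = X (f ∘ σ) (g ∘ σ) := by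
  rw [mul_Vperm_apply, Vperm_mul_apply]
  rfl

lemma Vperm_conj_list_prod (σ : Equiv.Perm (Fin n)) (l : List (Mat d n)) :
    Vperm d n σ * l.prod * Vperm d n σ⁻¹
      = (l.map fun X => Vperm d n σ * X * Vperm d n σ⁻¹).prod := by
  induction l with
  | nil => simp [Vperm_mul, Vperm_one]
  | cons X l ih =>
    rw [List.map_cons, List.prod_cons, List.prod_cons, ← ih]
    simp only [Matrix.mul_assoc, ← Matrix.mul_assoc (Vperm d n σ⁻¹), Vperm_mul, inv_mul_cancel,
      Vperm_one, Matrix.one_mul]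

lemma Vperm_conj_Pplus (σ : Equiv.Perm (Fin n)) (r s : Fin n) :
    Vperm d n σ * Pplus d n r s * Vperm d n σ⁻¹ = Pplus d n (σ r) (σ s) := by
  ext f g
  rw [Vperm_conj_apply]
  simp only [Pplus, Matrix.of_apply, Function.comp_apply]
  congr 1
  simp only [eq_iff_iff, and_congr_right_iff]
  intro _ _
  refine ⟨fun h t htr hts => ?_,
    fun h t htr hts => h (σ t) (σ.injective.ne htr) (σ.injective.ne hts)⟩
  simpa using h (σ.symm t) (by rintro rfl; simp at htr) (by rintro rfl; simp at hts)

lemma Pplus_mul_Pplus_apply {r s r' s' : Fin n} (h1 : r ≠ r') (h2 : r ≠ s') (h3 : s ≠ r')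
    (h4 : s ≠ s') (f g : Fin n → Fin d) :
    (Pplus d n r s * Pplus d n r' s') f g =
      if f r = f s ∧ g r = g s ∧ f r' = f s' ∧ g r' = g s' ∧
          ∀ t, t ≠ r → t ≠ s → t ≠ r' → t ≠ s' → f t = g t
      then (1 : ℂ) / d * (1 / d) else 0 := by
  -- the only intermediate configuration that contributes: `g` on `{r, s}`, `f` elsewhere
  set h₀ : Fin n → Fin d := fun t => if t = r ∨ t = s then g t else f t
  rw [Matrix.mul_apply, Finset.sum_eq_single h₀]
  · simp only [Pplus, Matrix.of_apply, h₀]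
    split_ifs <;> grind
  · intro h _ hne
    simp only [Pplus, Matrix.of_apply, mul_ite, ite_mul, zero_mul, mul_zero]
    split_ifs <;> first | rfl | (exfalso; apply hne; funext t; grind)
  · simp

lemma Pplus_commute {r s r' s' : Fin n} (h1 : r ≠ r') (h2 : r ≠ s') (h3 : s ≠ r') (h4 : s ≠ s') :
    Commute (Pplus d n r s) (Pplus d n r' s') := by
  ext f g
  rw [Pplus_mul_Pplus_apply h1 h2 h3 h4, Pplus_mul_Pplus_apply h1.symm h3.symm h2.symm h4.symm]
  refine if_congr ?_ rfl rfl
  constructor <;> rintro ⟨e1, e2, e3, e4, e5⟩ <;>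
    exact ⟨e3, e4, e1, e2, fun t t1 t2 t3 t4 => e5 t t3 t4 t1 t2⟩

end Operators

lemma List.prod_map_finRange_rev {M : Type*} [Monoid M] {k : ℕ} (F : Fin k → M)
    (hF : _root_.Pairwise fun i j => Commute (F i) (F j)) :
    ((List.finRange k).map (F ∘ Fin.rev)).prod = ((List.finRange k).map F).prod := by
  rw [← List.map_map, ← List.finRange_reverse, List.map_reverse]
  refine (List.reverse_perm _).prod_eq' (List.pairwise_reverse.2 (List.pairwise_map.2 ?_))
  exact (List.nodup_finRange k).pairwise_of_forall_ne fun i _ j _ hij => (hF hij).symm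

theorem Equiv.Perm.exists_extendDomain_eq {α β : Type*} {p : β → Prop} [DecidablePred p]
    (f : α ≃ Subtype p) {g : Equiv.Perm β} (hg : ∀ b, ¬p b → g b = b) :
    ∃ e : Equiv.Perm α, e.extendDomain f = g := by
  have hp : ∀ b, p (g b) ↔ p b := fun b => by
    by_cases hb : p b
    · exact iff_of_true (by_contra fun h => h (by rwa [g.injective (hg _ h)])) hb
    · rw [hg b hb]
  refine ⟨f.permCongr.symm (g.subtypePerm hp), Equiv.ext fun b => ?_⟩
  by_cases hb : p b
  · rw [extendDomain_apply_subtype _ _ hb]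
    simp [Equiv.permCongr]
  · rw [extendDomain_apply_not_subtype _ _ hb, hg b hb]

section PermExt

variable {m n : ℕ} (h : m ≤ n)

lemma permExt_one : permExt h 1 = 1 :=
  Equiv.Perm.extendDomain_one _

lemma permExt_inv (σ : Equiv.Perm (Fin m)) : permExt h σ⁻¹ = (permExt h σ)⁻¹ :=
  (Equiv.Perm.extendDomain_inv _ _).symm

lemma permExt_castLE (σ : Equiv.Perm (Fin m)) (i : Fin m) :
    permExt h σ (Fin.castLE h i) = Fin.castLE h (σ i) :=
  Equiv.Perm.extendDomain_apply_image _ _ _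

lemma permExt_apply_of_le (σ : Equiv.Perm (Fin m)) {i : Fin n} (hi : m ≤ i) :
    permExt h σ i = i :=
  Equiv.Perm.extendDomain_apply_not_subtype _ _ (not_lt.2 hi)

lemma exists_permExt_eq {g : Equiv.Perm (Fin n)} (hg : ∀ i : Fin n, m ≤ i → g i = i) :
    ∃ σ, permExt h σ = g :=
  Equiv.Perm.exists_extendDomain_eq _ fun i hi => hg i (not_lt.1 hi)

theorem bijOn_inv_apply_of_transversal {T : Set (Equiv.Perm (Fin n))}
    (hT : ∀ σ : Equiv.Perm (Fin n), ∃! τ, τ ∈ T ∧ ∃ ρ : Equiv.Perm (Fin m), σ = permExt h ρ * τ)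
    {k : ℕ} {u : Fin k → Fin n} (hu : Function.Injective u)
    (hu_range : ∀ i, i ∈ Set.range u ↔ m ≤ (i : ℕ)) :
    Set.BijOn (fun τ : Equiv.Perm (Fin n) => fun j => τ⁻¹ (u j)) T
      {v : Fin k → Fin n | Function.Injective v} := by
  refine ⟨fun τ _ => τ⁻¹.injective.comp hu, fun τ hτ τ' hτ' he => ?_, fun v hv => ?_⟩
  · have he' : ∀ j, τ⁻¹ (u j) = τ'⁻¹ (u j) := congrFun he
    obtain ⟨ρ, hρ⟩ := exists_permExt_eq h (g := τ * τ'⁻¹) fun i hi => by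
      obtain ⟨j, rfl⟩ := (hu_range i).2 hi
      rw [Equiv.Perm.mul_apply, ← he']
      exact τ.apply_symm_apply _
    exact (hT τ).unique ⟨hτ, 1, by rw [permExt_one, one_mul]⟩
      ⟨hτ', ρ, by rw [hρ, inv_mul_cancel_right]⟩
  · obtain ⟨σ, hσ⟩ := Equiv.Perm.exists_extending_pair u v hu hv
    obtain ⟨τ, ⟨hτ, ρ, hρ⟩, -⟩ := hT σ⁻¹
    have hτ_inv : τ⁻¹ = σ * permExt h ρ := by
      rw [inv_eq_iff_eq_inv, _root_.mul_inv_rev, hρ, inv_mul_cancel_left]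
    refine ⟨τ, hτ, funext fun j => ?_⟩
    show τ⁻¹ (u j) = v j
    rw [hτ_inv, Equiv.Perm.mul_apply, permExt_apply_of_le h ρ ((hu_range _).1 ⟨j, rfl⟩), hσ]

end PermExt

section MPBT

variable {d a k : ℕ}

lemma Vperm_conj_Vk (τ : Equiv.Perm (Fin (a + k))) :
    Vperm d (a + k + k) (permExt (Nat.le_add_right (a + k) k) τ⁻¹) * Vk d a k *
        Vperm d (a + k + k) (permExt (Nat.le_add_right (a + k) k) τ)
      = (d : ℂ) ^ k • ((List.finRange k).map fun j : Fin k =>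
          Pplus d (a + k + k) (Fin.castLE (Nat.le_add_right (a + k) k) (τ⁻¹ ⟨a + j, by omega⟩))
            ⟨a + k + k - 1 - j, by omega⟩).prod := by
  have hτ : permExt (Nat.le_add_right (a + k) k) τ
      = (permExt (Nat.le_add_right (a + k) k) τ⁻¹)⁻¹ := by
    rw [← permExt_inv, inv_inv]
  rw [hτ, Vk, Matrix.mul_smul, Matrix.smul_mul, Vperm_conj_list_prod, List.map_map]
  congr 2
  refine List.map_congr_left fun j _ => ?_
  rw [Function.comp_apply, Vperm_conj_Pplus]
  congr 1
  · exact permExt_castLE _ _ ⟨a + j, by omega⟩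
  · exact permExt_apply_of_le _ _ (by simp only; omega)

lemma PplusTuple_comp_rev {w : Fin k → Fin (a + k)} (hw : Function.Injective w) :
    PplusTuple d a k (w ∘ Fin.rev) = ((List.finRange k).map fun j : Fin k =>
      Pplus d (a + k + k) (Fin.castLE (Nat.le_add_right (a + k) k) (w j))
        ⟨a + k + k - 1 - j, by omega⟩).prod := by
  rw [← List.prod_map_finRange_rev]
  · unfold PplusTuple
    congr
    funext j
    simp only [Function.comp_apply, Fin.val_rev]
    congr 2
    omega
  · intro i j hij
    have hwi := (w i).isLt
    have hwj := (w j).isLt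
    have hij' : (i : ℕ) ≠ j := Fin.val_ne_of_ne hij
    refine Pplus_commute ((Fin.castLE_injective _).ne (hw.ne hij)) ?_ ?_ ?_ <;>
      exact Fin.ne_of_val_ne (by simp only [Fin.val_castLE]; omega)

lemma sigmaOp_eq_conj_Vk (hd : (d : ℂ) ≠ 0) (τ : Equiv.Perm (Fin (a + k))) :
    sigmaOp d a k (fun j : Fin k => τ⁻¹ ⟨a + k - 1 - j, by omega⟩)
      = ((1 : ℂ) / (d : ℂ) ^ (a + k)) •
        (Vperm d (a + k + k) (permExt (Nat.le_add_right (a + k) k) τ⁻¹) * Vk d a k *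
          Vperm d (a + k + k) (permExt (Nat.le_add_right (a + k) k) τ)) := by
  have hrev : (fun j : Fin k => τ⁻¹ ⟨a + k - 1 - j, by omega⟩)
      = (fun j : Fin k => τ⁻¹ ⟨a + j, by omega⟩) ∘ Fin.rev := by
    funext j
    simp only [Function.comp_apply, Fin.val_rev]
    congr 2
    omega
  have hw : Function.Injective fun j : Fin k => τ⁻¹ ⟨a + j, by omega⟩ :=
    τ⁻¹.injective.comp fun i j hij => Fin.ext (by simpa using hij)
  rw [hrev, sigmaOp, ← PplusTuple, PplusTuple_comp_rev hw, Vperm_conj_Vk, smul_smul, pow_add]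
  congr 1
  field_simp

end MPBT

/-- For a transversal `T` of the right cosets of `S(N-k)` in `S(N)`
(acting on the ports): (i) `τ ↦ (τ⁻¹(N),…,τ⁻¹(N-k+1))` is a bijection from `T` onto `I`;
(ii) `σ_{(N,N-1,…,N-k+1)} = (1/d^N)·V^{(k)}`;
(iii) `ρ = Σ_{i∈I} σ_i = (1/d^N)·Σ_{τ∈T} V_{τ⁻¹}·V^{(k)}·V_τ`.
Here `N = a + k` and `n = N + k = a + k + k`; ports are 0-indexed. -/
theorem statement_1 (d a k : ℕ) (hd : 2 ≤ d)
    (T : Finset (Equiv.Perm (Fin (a + k))))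
    (hT : ∀ σ : Equiv.Perm (Fin (a + k)),
      ∃! τ, τ ∈ T ∧ ∃ h : Equiv.Perm (Fin a),
        σ = permExt (Nat.le_add_right a k) h * τ) :
    Set.BijOn
      (fun τ : Equiv.Perm (Fin (a + k)) => fun j : Fin k =>
        τ⁻¹ ⟨a + k - 1 - (j : ℕ), by have := j.isLt; omega⟩)
      ↑T {v : Fin k → Fin (a + k) | Function.Injective v}
    ∧ sigmaOp d a k
        (fun j : Fin k => ⟨a + k - 1 - (j : ℕ), by have := j.isLt; omega⟩)
        = ((1 : ℂ) / (d : ℂ) ^ (a + k)) • Vk d a k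
    ∧ rhoOp d a k
        = ((1 : ℂ) / (d : ℂ) ^ (a + k)) •
          ∑ τ ∈ T,
            Vperm d (a + k + k) (permExt (Nat.le_add_right (a + k) k) τ⁻¹) *
              Vk d a k *
              Vperm d (a + k + k) (permExt (Nat.le_add_right (a + k) k) τ) := by
  have hd0 : (d : ℂ) ≠ 0 := Nat.cast_ne_zero.2 (by omega)
  have hbij := bijOn_inv_apply_of_transversal (Nat.le_add_right a k) hT
    (u := fun j : Fin k => ⟨a + k - 1 - j, by omega⟩)
    (fun i j hij => Fin.ext (by have := congrArg Fin.val hij; simp only at this; omega))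
    (fun i => ⟨by rintro ⟨j, rfl⟩; simp only; omega,
      fun hi => ⟨⟨a + k - 1 - i, by omega⟩, Fin.ext (by simp only; omega)⟩⟩)
  refine ⟨hbij, ?_, ?_⟩
  · have h1 := sigmaOp_eq_conj_Vk (a := a) (k := k) hd0 1
    rwa [inv_one, permExt_one, Vperm_one, Matrix.one_mul, Matrix.mul_one] at h1
  · rw [rhoOp, Finset.smul_sum]
    refine (Finset.sum_bij (fun τ hτ => ⟨_, hbij.mapsTo hτ⟩) (fun _ _ => Finset.mem_univ _)
      (fun τ hτ τ' hτ' he => hbij.injOn hτ hτ' (congrArg Subtype.val he))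
      (fun v _ => ?_) (fun τ _ => (sigmaOp_eq_conj_Vk hd0 τ).symm)).symm
    obtain ⟨τ, hτ, he⟩ := hbij.surjOn v.2
    exact ⟨τ, hτ, Subtype.ext he⟩
end

section
/- Let φ^μ be an irreducible unitary matrix representation of S(n) with nonzero Schur–Weyl multiplicity m_μ on (ℂ^d)^{⊗n}, given in a basis adapted to S(n−1) (i.e. in PRIR form relative to S(n) ⊃ S(n−1)), so that for every κ ∈ S(n−1) the matrix φ^μ(κ) is block diagonal with diagonal blocks the fixed matrix irreps φ^β of S(n−1) for the irreps β occurring in the (multiplicity-free) restriction of μ. Set φ̃^μ(a,n) := d^{δ_{a,n}}·φ^μ((a,n)) for a = 1,…,n, where (a,n) is the transposition of a and n and (n,n) is the identity (so φ̃^μ(n,n) = d·1). Then for every irrep β of S(n−1) occurring in the restriction of μ, the diagonal β-block of Σ_{a=1}^{n} φ̃^μ(a,n) equals x^μ_β·1 with x^μ_β = n·(m_μ·d_β)/(m_β·d_μ). -/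
open scoped BigOperators
open scoped Classical
open scoped ComplexOrder
open Matrix

/-!
Write `X = φ(d + J)` with `J = Σ_{a<n} (a n)` the Jucys–Murphy element. Conjugation by
`S(n-1)` permutes the transpositions `(a n)`, so `X` commutes with the restriction of `φ` to
`S(n-1)`, and by Schur's lemma its `β`-block is a scalar `c`. To find `c`, split
`S(n) = ⋃_a (a n) S(n-1)`: since `tr V_{(a n) κ} = d^{δ_{a n}} tr V_κ`, the element
`Σ_τ tr(V_τ) φ(τ⁻¹)`, which Schur's lemma identifies with `n! m_μ / d_μ`, factors as
`(Σ_κ tr(V_κ) φ(κ⁻¹)) X`. On a diagonal entry of the `β`-block this reads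
`n! m_μ / d_μ = c · (n-1)! m_β / d_β`, and `m_μ ≠ 0` forces `m_β ≠ 0`.
-/

open Equiv

section TraceVperm

variable (d : ℕ) {n : ℕ}

lemma trace_Vperm (σ : Perm (Fin n)) :
    trace (Vperm d n σ) = ∑ f : Fin n → Fin d, if f ∘ σ = f then (1 : ℂ) else 0 := by
  simp [trace, Vperm]

lemma trace_Vperm_conj (σ τ : Perm (Fin n)) :
    trace (Vperm d n (σ * τ * σ⁻¹)) = trace (Vperm d n τ) := by
  simp only [trace_Vperm]
  refine Fintype.sum_equiv (σ.symm.arrowCongr (Equiv.refl (Fin d))) _ _ fun f => ?_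
  simp only [Perm.coe_mul, Perm.inv_def, ← Function.comp_assoc, comp_symm_eq]
  rfl

lemma trace_Vperm_inv (σ : Perm (Fin n)) :
    trace (Vperm d n σ⁻¹) = trace (Vperm d n σ) := by
  simp only [trace_Vperm]
  refine Finset.sum_congr rfl fun f _ => ?_
  exact if_congr ((comp_symm_eq σ f f).trans eq_comm) rfl rfl

lemma star_trace_Vperm (σ : Perm (Fin n)) :
    star (trace (Vperm d n σ)) = trace (Vperm d n σ) := by
  simp [trace_Vperm]

end TraceVperm

lemma IsUnitaryIrrep.conjTranspose_eq {G : Type*} [Group G] {e : ℕ}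
    {φ : G →* Matrix (Fin e) (Fin e) ℂ} (hφ : IsUnitaryIrrep φ) (g : G) :
    (φ g)ᴴ = φ g⁻¹ :=
  left_inv_eq_right_inv (hφ.1 g) (by rw [← map_mul, mul_inv_cancel, map_one])

section VpermTraceSum

variable (d : ℕ) {m e : ℕ} (φ : Perm (Fin m) →* Matrix (Fin e) (Fin e) ℂ)

def vpermTraceSum : Matrix (Fin e) (Fin e) ℂ :=
  ∑ τ : Perm (Fin m), trace (Vperm d m τ) • φ τ⁻¹

lemma vpermTraceSum_mul_comm (σ : Perm (Fin m)) :
    vpermTraceSum d φ * φ σ = φ σ * vpermTraceSum d φ := by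
  rw [vpermTraceSum, Finset.sum_mul, Finset.mul_sum]
  refine Fintype.sum_equiv ((Equiv.mulLeft σ⁻¹).trans (Equiv.mulRight σ)) _ _ fun τ => ?_
  have hconj := trace_Vperm_conj d σ⁻¹ τ
  rw [inv_inv] at hconj
  simp only [trans_apply, coe_mulLeft, coe_mulRight, hconj, smul_mul_assoc, mul_smul_comm,
    ← map_mul]
  congr 2
  group

lemma trace_Pop : trace (Pop d m φ) = (e / m.factorial : ℂ) * trace (vpermTraceSum d φ) := by
  simp only [Pop, Eop, vpermTraceSum, trace_sum, trace_smul, smul_eq_mul, ← Finset.mul_sum]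
  rw [Finset.sum_comm]
  simp only [trace, diag_apply, Finset.sum_mul, mul_comm]

variable {φ}

lemma IsUnitaryIrrep.conjTranspose_vpermTraceSum (hφ : IsUnitaryIrrep φ) :
    (vpermTraceSum d φ)ᴴ = vpermTraceSum d φ := by
  simp only [vpermTraceSum, conjTranspose_sum, conjTranspose_smul, hφ.conjTranspose_eq,
    star_trace_Vperm, inv_inv]
  exact Fintype.sum_equiv (Equiv.inv _) _ _ fun τ => by simp [trace_Vperm_inv]

lemma IsUnitaryIrrep.vpermTraceSum_eq (hφ : IsUnitaryIrrep φ) (he : 0 < e) :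
    vpermTraceSum d φ = ((m.factorial * multSW d m φ / e : ℝ) : ℂ) • 1 := by
  obtain ⟨t, ht⟩ := hφ.2 _ (vpermTraceSum_mul_comm d φ)
  have ht_real : (t.re : ℂ) = t := by
    have h := congrFun (congrFun (hφ.conjTranspose_vpermTraceSum d) ⟨0, he⟩) ⟨0, he⟩
    rw [ht] at h
    simpa using Complex.conj_eq_iff_re.mp (by simpa using h)
  have hmult : multSW d m φ = e * t.re / m.factorial := by
    rw [multSW, trace_Pop, ht, trace_smul, trace_one, ← ht_real]
    simp only [Fintype.card_fin, smul_eq_mul, ← Complex.ofReal_natCast, ← Complex.ofReal_div,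
      ← Complex.ofReal_mul, Complex.ofReal_re]
    field_simp
  have hcoeff : (m.factorial * (e * t.re / m.factorial) / e : ℝ) = t.re := by field_simp
  rw [ht, hmult, hcoeff, ht_real]

end VpermTraceSum

section LastLetter

variable {b : ℕ}

lemma permExt_castSucc (κ : Perm (Fin b)) (j : Fin b) :
    permExt (Nat.le_add_right b 1) κ j.castSucc = (κ j).castSucc :=
  Perm.extendDomain_apply_image κ (finLtEquiv _) j

lemma permExt_last (κ : Perm (Fin b)) :
    permExt (Nat.le_add_right b 1) κ (Fin.last b) = Fin.last b :=
  Perm.extendDomain_apply_not_subtype κ (finLtEquiv _) (by simp)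

lemma snoc_comp_permExt {α : Type*} (κ : Perm (Fin b)) (g : Fin b → α) (v : α) :
    (Fin.snoc g v : Fin (b + 1) → α) ∘ permExt (Nat.le_add_right b 1) κ = Fin.snoc (g ∘ κ) v := by
  funext i
  induction i using Fin.lastCases <;> simp [permExt_castSucc, permExt_last]

lemma snoc_comp_swap_castSucc_last {α : Type*} (a : Fin b) (g : Fin b → α) (v : α) :
    (Fin.snoc g v : Fin (b + 1) → α) ∘ swap a.castSucc (Fin.last b) =
      Fin.snoc (Function.update g a v) (g a) := by
  funext i
  induction i using Fin.lastCases with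
  | last => simp
  | cast j =>
    rcases eq_or_ne j a with rfl | hj
    · simp
    · simp [swap_apply_of_ne_of_ne (Fin.castSucc_injective _ |>.ne hj) (Fin.castSucc_ne_last j), hj]

lemma permExt_inv_s4 (κ : Perm (Fin b)) :
    (permExt (Nat.le_add_right b 1) κ)⁻¹ = permExt (Nat.le_add_right b 1) κ⁻¹ :=
  rfl

lemma sum_arrow_fin_succ {α β : Type*} [Fintype α] [AddCommMonoid β]
    (F : (Fin (b + 1) → α) → β) : ∑ f, F f = ∑ v : α, ∑ g : Fin b → α, F (Fin.snoc g v) := by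
  rw [← (Fin.snocEquiv fun _ => α).sum_comp, Fintype.sum_prod_type]
  rfl

variable (d : ℕ)

lemma trace_Vperm_permExt (κ : Perm (Fin b)) :
    trace (Vperm d (b + 1) (permExt (Nat.le_add_right b 1) κ)) = d * trace (Vperm d b κ) := by
  rw [trace_Vperm, sum_arrow_fin_succ]
  simp only [snoc_comp_permExt, Fin.snoc_inj, and_true]
  simp [trace_Vperm]

lemma trace_Vperm_swap_castSucc_mul_permExt (a : Fin b) (κ : Perm (Fin b)) :
    trace (Vperm d (b + 1) (swap a.castSucc (Fin.last b) * permExt (Nat.le_add_right b 1) κ)) =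
      trace (Vperm d b κ) := by
  rw [trace_Vperm, sum_arrow_fin_succ, Finset.sum_comm]
  simp only [Perm.coe_mul, ← Function.comp_assoc,
    snoc_comp_swap_castSucc_last, snoc_comp_permExt, Fin.snoc_inj]
  rw [trace_Vperm]
  refine Finset.sum_congr rfl fun g _ => ?_
  have hfix : ∀ v, (Function.update g a v ∘ κ = g ∧ g a = v) ↔ (g ∘ κ = g ∧ g a = v) :=
    fun v => and_congr_left fun h => by rw [← h, Function.update_eq_self]
  simp only [hfix, ite_and]
  split_ifs <;> simp

lemma trace_Vperm_swap_last_mul_permExt (a : Fin (b + 1)) (κ : Perm (Fin b)) :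
    trace (Vperm d (b + 1) (swap a (Fin.last b) * permExt (Nat.le_add_right b 1) κ)) =
      (if a = Fin.last b then (d : ℂ) else 1) * trace (Vperm d b κ) := by
  induction a using Fin.lastCases with
  | last => rw [swap_self, ← Perm.one_def, one_mul, if_pos rfl, trace_Vperm_permExt]
  | cast j => simp [trace_Vperm_swap_castSucc_mul_permExt, Fin.castSucc_ne_last]

lemma bijective_swap_last_mul_permExt :
    Function.Bijective fun p : Perm (Fin b) × Fin (b + 1) =>
      swap p.2 (Fin.last b) * permExt (Nat.le_add_right b 1) p.1 := by
  refine (Fintype.bijective_iff_injective_and_card _).2 ⟨?_, ?_⟩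
  · rintro ⟨κ, a⟩ ⟨κ', a'⟩ h
    have ha : a = a' := by
      simpa [permExt_last] using congrArg (fun σ : Perm (Fin (b + 1)) => σ (Fin.last b)) h
    subst ha
    exact Prod.ext (Perm.extendDomainHom_injective _ (mul_left_cancel h)) rfl
  · simp [Fintype.card_perm, Nat.factorial_succ, mul_comm]

lemma sum_perm_fin_succ {M : Type*} [AddCommMonoid M] (F : Perm (Fin (b + 1)) → M) :
    ∑ τ, F τ = ∑ κ : Perm (Fin b), ∑ a : Fin (b + 1),
      F (swap a (Fin.last b) * permExt (Nat.le_add_right b 1) κ) := by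
  rw [← Fintype.sum_prod_type']
  exact (Fintype.sum_bijective _ bijective_swap_last_mul_permExt _ _ fun _ => rfl).symm

end LastLetter

section ShiftedJucysMurphy

variable (d : ℕ) {b e : ℕ} (φ : Perm (Fin (b + 1)) →* Matrix (Fin e) (Fin e) ℂ)

/-- `φ(d + J)` for the Jucys–Murphy element `J = Σ_{a < b} (a b)` of `S(b+1)`: the term
`a = b` is `d • φ 1`. -/
def shiftedJucysMurphy : Matrix (Fin e) (Fin e) ℂ :=
  ∑ a : Fin (b + 1), (if a = Fin.last b then (d : ℂ) else 1) • φ (swap a (Fin.last b))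

lemma rep_permExt_mul_shiftedJucysMurphy (κ : Perm (Fin b)) :
    φ (permExt (Nat.le_add_right b 1) κ) * shiftedJucysMurphy d φ =
      shiftedJucysMurphy d φ * φ (permExt (Nat.le_add_right b 1) κ) := by
  simp only [shiftedJucysMurphy, Finset.mul_sum, Finset.sum_mul, mul_smul_comm, smul_mul_assoc,
    ← map_mul]
  refine Fintype.sum_equiv (permExt (Nat.le_add_right b 1) κ) _ _ fun a => ?_
  rw [mul_swap_eq_swap_mul, permExt_last]
  simp only [(permExt _ κ).injective.eq_iff' (permExt_last κ)]

lemma vpermTraceSum_eq_sum_mul_shiftedJucysMurphy :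
    vpermTraceSum d φ = (∑ κ : Perm (Fin b),
      trace (Vperm d b κ) • φ (permExt (Nat.le_add_right b 1) κ⁻¹)) * shiftedJucysMurphy d φ := by
  rw [vpermTraceSum, sum_perm_fin_succ, Finset.sum_mul]
  refine Finset.sum_congr rfl fun κ _ => ?_
  simp only [shiftedJucysMurphy, Finset.mul_sum, trace_Vperm_swap_last_mul_permExt,
    _root_.mul_inv_rev, swap_inv, permExt_inv_s4, map_mul, smul_mul_assoc, mul_smul]
  exact Finset.sum_congr rfl fun a _ => by rw [mul_smul_comm, smul_comm]

end ShiftedJucysMurphy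

section PRIRBlock

variable {a k e : ℕ} {Φ : IrrepFamily a} (P : PRIRData a k Φ e)

lemma PRIRData.rep_permExt_mul_apply (κ : Perm (Fin a)) (N : Matrix (Fin e) (Fin e) ℂ)
    (r : P.Path) (l : Fin (Φ.dim (P.endOf r))) (j : Fin e) :
    (P.rep (permExt (Nat.le_add_right a k) κ) * N) (P.basis ⟨r, l⟩) j =
      ∑ l', Φ.rep (P.endOf r) κ l l' * N (P.basis ⟨r, l'⟩) j := by
  rw [mul_apply, ← P.basis.sum_comp, ← Finset.univ_sigma_univ, Finset.sum_sigma,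
    Fintype.sum_eq_single r fun r' hr' => Finset.sum_eq_zero fun l' _ => by
      rw [P.block_off κ r r' (Ne.symm hr'), zero_mul]]
  simp only [P.block_diag]

lemma PRIRData.mul_rep_permExt_apply (κ : Perm (Fin a)) (N : Matrix (Fin e) (Fin e) ℂ)
    (r : P.Path) (l : Fin (Φ.dim (P.endOf r))) (i : Fin e) :
    (N * P.rep (permExt (Nat.le_add_right a k) κ)) i (P.basis ⟨r, l⟩) =
      ∑ l', N i (P.basis ⟨r, l'⟩) * Φ.rep (P.endOf r) κ l' l := by
  rw [mul_apply, ← P.basis.sum_comp, ← Finset.univ_sigma_univ, Finset.sum_sigma,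
    Fintype.sum_eq_single r fun r' hr' => Finset.sum_eq_zero fun l' _ => by
      rw [P.block_off κ r' r hr', mul_zero]]
  simp only [P.block_diag]

lemma PRIRData.exists_block_eq_of_commute {N : Matrix (Fin e) (Fin e) ℂ}
    (hN : ∀ κ, P.rep (permExt (Nat.le_add_right a k) κ) * N =
      N * P.rep (permExt (Nat.le_add_right a k) κ)) (r : P.Path) :
    ∃ c : ℂ, ∀ l l', N (P.basis ⟨r, l⟩) (P.basis ⟨r, l'⟩) = c * if l = l' then 1 else 0 := by
  let M : Matrix (Fin (Φ.dim (P.endOf r))) (Fin (Φ.dim (P.endOf r))) ℂ :=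
    of fun l l' => N (P.basis ⟨r, l⟩) (P.basis ⟨r, l'⟩)
  have hM : ∀ κ, M * Φ.rep (P.endOf r) κ = Φ.rep (P.endOf r) κ * M := fun κ => by
    ext l l'
    have h := congrFun (congrFun (hN κ) (P.basis ⟨r, l⟩)) (P.basis ⟨r, l'⟩)
    rw [P.rep_permExt_mul_apply, P.mul_rep_permExt_apply] at h
    simpa only [M, mul_apply, of_apply] using h.symm
  obtain ⟨c, hc⟩ := (Φ.irrep (P.endOf r)).2 M hM
  exact ⟨c, fun l l' => by simpa [M, one_apply] using congrFun (congrFun hc l) l'⟩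

lemma PRIRData.sum_trace_smul_rep_permExt_mul_apply (d : ℕ) {N : Matrix (Fin e) (Fin e) ℂ}
    {r : P.Path} {c : ℂ}
    (hN : ∀ l l', N (P.basis ⟨r, l⟩) (P.basis ⟨r, l'⟩) = c * if l = l' then 1 else 0)
    (l : Fin (Φ.dim (P.endOf r))) :
    ((∑ κ : Perm (Fin a), trace (Vperm d a κ) • P.rep (permExt (Nat.le_add_right a k) κ⁻¹)) * N)
        (P.basis ⟨r, l⟩) (P.basis ⟨r, l⟩) =
      c * vpermTraceSum d (Φ.rep (P.endOf r)) l l := by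
  simp only [vpermTraceSum, Finset.sum_mul, Matrix.sum_apply, smul_mul_assoc, Matrix.smul_apply,
    P.rep_permExt_mul_apply, hN, mul_ite, mul_one, mul_zero, Finset.sum_ite_eq', Finset.mem_univ,
    if_true, Finset.mul_sum, smul_eq_mul]
  exact Finset.sum_congr rfl fun _ _ => by ring

end PRIRBlock

lemma PRIRData.factorial_mul_multSW_div_eq {d b e : ℕ} {Φ : IrrepFamily b}
    (P : PRIRData b 1 Φ e) {r : P.Path} {c : ℂ}
    (hc : ∀ l l', shiftedJucysMurphy d P.rep (P.basis ⟨r, l⟩) (P.basis ⟨r, l'⟩) =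
      c * if l = l' then 1 else 0) :
    (((b + 1).factorial * multSW d (b + 1) P.rep / e : ℝ) : ℂ) =
      c * ((b.factorial * multSW d b (Φ.rep (P.endOf r)) / Φ.dim (P.endOf r) : ℝ) : ℂ) := by
  let l : Fin (Φ.dim (P.endOf r)) := ⟨0, Φ.dim_pos _⟩
  have h := congrFun (congrFun (vpermTraceSum_eq_sum_mul_shiftedJucysMurphy d P.rep)
    (P.basis ⟨r, l⟩)) (P.basis ⟨r, l⟩)
  rw [P.sum_trace_smul_rep_permExt_mul_apply d hc, P.irrep.vpermTraceSum_eq d (P.basis ⟨r, l⟩).pos,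
    (Φ.irrep _).vpermTraceSum_eq d (Φ.dim_pos _)] at h
  simpa only [Matrix.smul_apply, one_apply_eq, smul_eq_mul, mul_one] using h

/-- For an irrep `φ^μ` of `S(n)` (here `n = b + 1`) with nonzero
Schur–Weyl multiplicity, in PRIR form relative to `S(n) ⊃ S(n-1)` with
multiplicity-free restriction, the diagonal `β`-block of
`Σ_{a=1}^{n} d^{δ_{a,n}}·φ^μ((a,n))` equals `x^μ_β·1` with
`x^μ_β = n·(m_μ·d_β)/(m_β·d_μ)`. -/
theorem statement_4 (d b : ℕ)
    (Φ : IrrepFamily b) (e : ℕ) (P : PRIRData b 1 Φ e)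
    (hm : multSW d (b + 1) P.rep ≠ 0)
    (r : P.Path) (l l' : Fin (Φ.dim (P.endOf r))) :
    (∑ x : Fin (b + 1),
        (if (x : ℕ) = b then (d : ℂ) else 1) *
          P.rep (Equiv.swap x ⟨b, by omega⟩) (P.basis ⟨r, l⟩) (P.basis ⟨r, l'⟩))
      = ((((b : ℝ) + 1) * multSW d (b + 1) P.rep * (Φ.dim (P.endOf r) : ℝ) /
            (multSW d b (Φ.rep (P.endOf r)) * (e : ℝ)) : ℝ) : ℂ) *
          (if l = l' then 1 else 0) := by
  obtain ⟨c, hc⟩ := P.exists_block_eq_of_commute (rep_permExt_mul_shiftedJucysMurphy d P.rep) r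
  have hkey := P.factorial_mul_multSW_div_eq hc
  have he : (e : ℂ) ≠ 0 := Nat.cast_ne_zero.2 (P.basis ⟨r, l⟩).pos.ne'
  have hβ : (Φ.dim (P.endOf r) : ℂ) ≠ 0 := Nat.cast_ne_zero.2 (Φ.dim_pos _).ne'
  have hmβ : (multSW d b (Φ.rep (P.endOf r)) : ℂ) ≠ 0 := by
    rintro hmβ
    push_cast at hkey
    simp [hmβ, hm, he, Nat.factorial_ne_zero] at hkey
  have hc_val : c = (((b + 1) * multSW d (b + 1) P.rep * Φ.dim (P.endOf r) /
      (multSW d b (Φ.rep (P.endOf r)) * e) : ℝ) : ℂ) := by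
    rw [Nat.factorial_succ] at hkey
    push_cast at hkey ⊢
    field_simp at hkey ⊢
    linear_combination -hkey
  have hsum : (∑ x : Fin (b + 1), (if (x : ℕ) = b then (d : ℂ) else 1) *
      P.rep (swap x (Fin.last b)) (P.basis ⟨r, l⟩) (P.basis ⟨r, l'⟩)) =
      shiftedJucysMurphy d P.rep (P.basis ⟨r, l⟩) (P.basis ⟨r, l'⟩) := by
    simp only [shiftedJucysMurphy, Matrix.sum_apply, Matrix.smul_apply, smul_eq_mul, Fin.ext_iff,
      Fin.val_last]
  rw [show (⟨b, by omega⟩ : Fin (b + 1)) = Fin.last b from rfl, hsum, hc, hc_val]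
end
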